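/- Let μ ≥ 0, 0 < γ < 1, and let g : ℝ → ℝ be a C² solution of the reduced travelling-wave ODE g'' + μ g' + sin g − γ = 0. Suppose there exist ξ_k ∈ ℝ and k ∈ ℤ with g(ξ_k) = π − arcsin γ + 2kπ, and that at every 'time' ξ ≤ ξ_k at which g(ξ) equals some local maximum point π − arcsin γ + 2lπ (l ∈ ℤ) of the potential U one has g'(ξ) > 0. Then g'(ξ) > 0 for all ξ ≤ ξ_k. -/

import Mathlib

/-!
Energy argument, with `U` the washboard potential, `e = g'²/2 + U ∘ g` the nonincreasing energy
and `M_l = π - arcsin γ + 2lπ` the maxima of `U`. If `g' ≤ 0` somewhere before `ξ_k`, let `ξ₁` be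
the last zero of `g'` there and `M_{l-1} ≤ g ξ₁ < M_l`. Moving right on `(ξ₁, ξ_k]`, `g` passes
`M_l` with positive speed, so `U M_l < e ξ₁ = U (g ξ₁)`: the particle rests at `ξ₁` on the
descending side of the well below `M_l`, above the barrier height. There the force `γ - sin g` is
positive, so `g' < 0` just before `ξ₁`. Since `g` never crosses `M_l` leftwards, it stays below
`M_l` backwards in time. If `g'` had an earlier zero `τ`, then `g ξ₁ < g τ < M_l` and
`U (g τ) < U (g ξ₁) ≤ e τ = U (g τ)`. Otherwise `g' < 0` on `(-∞, ξ₁)` and, far back in time, `g'`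
is bounded away from `0`, by the energy margin over `U` near `M_l` or by the positive force
further down; then `g` is unbounded backwards.
-/

open Real Set Filter Topology

theorem exists_zero_forall_pos_Ioc {h : ℝ → ℝ} {a b : ℝ} (hh : ContinuousOn h (Icc a b))
    (hab : a ≤ b) (ha : h a ≤ 0) (hb : 0 < h b) :
    ∃ c ∈ Ico a b, h c = 0 ∧ ∀ x ∈ Ioc c b, 0 < h x := by
  set S := Icc a b ∩ h ⁻¹' Iic 0
  have hS : IsCompact S := isCompact_Icc.of_isClosed_subset
    (hh.preimage_isClosed_of_isClosed isClosed_Icc isClosed_Iic) inter_subset_left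
  obtain ⟨hcab, hc⟩ : sSup S ∈ S := hS.sSup_mem ⟨a, ⟨le_rfl, hab⟩, ha⟩
  have hpos : ∀ x ∈ Ioc (sSup S) b, 0 < h x := fun x hx => not_le.mp fun hx' =>
    hx.1.not_ge (le_csSup hS.bddAbove ⟨⟨hcab.1.trans hx.1.le, hx.2⟩, hx'⟩)
  have hcb : sSup S < b := hcab.2.lt_of_ne fun hcb => hb.not_ge (hcb ▸ hc)
  refine ⟨sSup S, ⟨hcab.1, hcb⟩, le_antisymm hc (not_lt.mp fun hneg => ?_), hpos⟩
  obtain ⟨ζ, hζ, hζ0⟩ :=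
    intermediate_value_Ioo hcb.le (hh.mono (Icc_subset_Icc hcab.1 le_rfl)) ⟨hneg, hb⟩
  exact (hpos ζ ⟨hζ.1, hζ.2.le⟩).ne' hζ0

theorem exists_zero_forall_neg_Ioo {h : ℝ → ℝ} {a b : ℝ} (hh : ContinuousOn h (Icc a b))
    (hab : a < b) (ha : 0 ≤ h a) (hb : ∀ᶠ x in 𝓝[<] b, h x < 0) :
    ∃ c ∈ Ico a b, h c = 0 ∧ ∀ x ∈ Ioo c b, h x < 0 := by
  obtain ⟨u, hub : u < b, hu⟩ := mem_nhdsLT_iff_exists_Ioo_subset.mp hb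
  set p := (max a u + b) / 2
  have hap : a < p := by simp only [p]; linarith [le_max_left a u]
  have hup : u < p := by simp only [p]; linarith [le_max_right a u]
  have hpb : p < b := by simp only [p]; linarith [max_lt hab hub]
  obtain ⟨c, hc, hc0, hneg⟩ := exists_zero_forall_pos_Ioc
    (hh.mono (Icc_subset_Icc le_rfl hpb.le)).neg hap.le (neg_nonpos.mpr ha)
    (neg_pos.mpr (hu ⟨hup, hpb⟩))
  refine ⟨c, ⟨hc.1, hc.2.trans hpb⟩, neg_eq_zero.mp hc0, fun x hx => ?_⟩
  rcases le_or_gt x p with hxp | hpx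
  · exact neg_pos.mp (hneg x ⟨hx.1, hxp⟩)
  · exact hu ⟨hup.trans hpx, hx.2⟩

theorem lt_of_forall_ne_of_lt {f : ℝ → ℝ} {a b m : ℝ} (hab : a ≤ b)
    (hf : ContinuousOn f (Icc a b)) (hb : f b < m) (hne : ∀ x ∈ Ico a b, f x ≠ m) :
    f a < m := by
  by_contra! ha
  obtain ⟨c, hc, hfc⟩ := intermediate_value_Ico' hab hf ⟨hb, ha⟩
  exact hne c hc hfc

theorem HasDerivAt.eventually_nhdsLT_lt {f : ℝ → ℝ} {f' x : ℝ} (hf : HasDerivAt f f' x)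
    (hf' : 0 < f') : ∀ᶠ y in 𝓝[<] x, f y < f x := by
  have hslope : ∀ᶠ y in 𝓝[<] x, 0 < slope f x y :=
    ((hasDerivAt_iff_tendsto_slope.mp hf).mono_left
      (nhdsWithin_mono _ fun y hy => ne_of_lt hy)).eventually (lt_mem_nhds hf')
  filter_upwards [hslope, self_mem_nhdsWithin] with y hy hyx
  rw [slope_def_field] at hy
  rcases div_pos_iff.mp hy with ⟨-, h⟩ | ⟨h, -⟩
  · exact absurd h (sub_neg.mpr hyx).not_gt
  · exact sub_neg.mp h

theorem not_bddAbove_image_Iic_of_deriv_le_neg {f : ℝ → ℝ} (hf : Differentiable ℝ f)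
    {A c : ℝ} (hc : 0 < c) (hd : ∀ x ≤ A, deriv f x ≤ -c) : ¬BddAbove (f '' Iic A) := by
  rintro ⟨B, hB⟩
  set x := A - (|B - f A| + 1) / c
  have hxA : x ≤ A := by
    have : 0 < (|B - f A| + 1) / c := by positivity
    simp only [x]; linarith
  have hgrowth : f A - f x ≤ -c * (A - x) :=
    (convex_Iic A).image_sub_le_mul_sub_of_deriv_le hf.continuous.continuousOn
      hf.differentiableOn (fun y hy => hd y (interior_subset (s := Iic A) hy))
      x hxA A self_mem_Iic hxA
  have hcx : c * (A - x) = |B - f A| + 1 := by simp only [x]; field_simp; ring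
  linarith [hB (mem_image_of_mem f hxA), le_abs_self (B - f A)]

theorem lt_max_of_strictAntiOn_of_strictMonoOn {f : ℝ → ℝ} {a b c y z w : ℝ}
    (hanti : StrictAntiOn f (Icc a c)) (hmono : StrictMonoOn f (Icc c b))
    (hy : a ≤ y) (hyz : y < z) (hzw : z < w) (hw : w ≤ b) : f z < max (f y) (f w) := by
  rcases le_total z c with hzc | hcz
  · exact lt_max_of_lt_left (hanti ⟨hy, hyz.le.trans hzc⟩ ⟨hy.trans hyz.le, hzc⟩ hyz)
  · exact lt_max_of_lt_right (hmono ⟨hcz, hzw.le.trans hw⟩ ⟨hcz.trans hzw.le, hw⟩ hzw)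

theorem le_max_of_antitoneOn_of_monotoneOn {f : ℝ → ℝ} {a b c y z w : ℝ}
    (hanti : AntitoneOn f (Icc a c)) (hmono : MonotoneOn f (Icc c b))
    (hy : a ≤ y) (hyz : y ≤ z) (hzw : z ≤ w) (hw : w ≤ b) : f z ≤ max (f y) (f w) := by
  rcases le_total z c with hzc | hcz
  · exact le_max_of_le_left (hanti ⟨hy, hyz.trans hzc⟩ ⟨hy.trans hyz, hzc⟩ hyz)
  · exact le_max_of_le_right (hmono ⟨hcz, hzw.trans hw⟩ ⟨hcz.trans hzw, hw⟩ hzw)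

theorem sin_lt_sin_of_lt_of_lt_pi_sub {a y : ℝ} (ha : -(π / 2) ≤ a)
    (h₁ : a < y) (h₂ : y < π - a) : sin a < sin y := by
  rw [← sub_pos, sin_sub_sin]
  exact mul_pos (mul_pos two_pos (sin_pos_of_pos_of_lt_pi (by linarith) (by linarith)))
    (cos_pos_of_mem_Ioo ⟨by linarith, by linarith⟩)

theorem sin_lt_sin_of_neg_pi_sub_lt_of_lt {a y : ℝ} (ha : a ≤ π / 2)
    (h₁ : -π - a < y) (h₂ : y < a) : sin y < sin a := by
  rw [← sub_neg, sin_sub_sin]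
  exact mul_neg_of_neg_of_pos
    (mul_neg_of_pos_of_neg two_pos (sin_neg_of_neg_of_neg_pi_lt (by linarith) (by linarith)))
    (cos_pos_of_mem_Ioo ⟨by linarith, by linarith⟩)

noncomputable def washboardPotential (γ x : ℝ) : ℝ := -(cos x + γ * x)

noncomputable def washboardMax (γ : ℝ) (l : ℤ) : ℝ := π - arcsin γ + 2 * l * π

noncomputable def washboardMin (γ : ℝ) (l : ℤ) : ℝ := arcsin γ + 2 * l * π

section Washboard

variable {γ : ℝ}

theorem hasDerivAt_washboardPotential (γ x : ℝ) :
    HasDerivAt (washboardPotential γ) (sin x - γ) x :=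
  ((hasDerivAt_cos x).add ((hasDerivAt_id x).const_mul γ)).neg.congr_deriv (by ring)

theorem continuous_washboardPotential (γ : ℝ) : Continuous (washboardPotential γ) := by
  unfold washboardPotential
  fun_prop

theorem washboardMax_strictMono (γ : ℝ) : StrictMono (washboardMax γ) := fun l k hlk => by
  have : (l : ℝ) < k := by exact_mod_cast hlk
  unfold washboardMax
  nlinarith [pi_pos]

theorem exists_washboardMax_sub_one_le_lt (γ x : ℝ) :
    ∃ l : ℤ, washboardMax γ (l - 1) ≤ x ∧ x < washboardMax γ l := by
  obtain ⟨l, hl, -⟩ := existsUnique_sub_zsmul_mem_Ico (by positivity : (0 : ℝ) < 2 * π) x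
    (washboardMax γ (-1))
  simp only [washboardMax, mem_Ico, zsmul_eq_mul] at hl
  refine ⟨l, ?_, ?_⟩ <;> simp only [washboardMax] <;> push_cast at hl ⊢ <;> linarith

theorem sin_lt_of_washboardMax_lt_of_lt_washboardMin (hγ₁ : -1 ≤ γ) (hγ₂ : γ ≤ 1) {l : ℤ}
    {x : ℝ} (h₁ : washboardMax γ (l - 1) < x) (h₂ : x < washboardMin γ l) : sin x < γ := by
  rw [← sin_sub_int_mul_two_pi x l]
  conv_rhs => rw [← sin_arcsin hγ₁ hγ₂]
  simp only [washboardMax, washboardMin] at h₁ h₂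
  push_cast at h₁
  exact sin_lt_sin_of_neg_pi_sub_lt_of_lt (arcsin_le_pi_div_two γ)
    (by linarith) (by linarith)

theorem lt_sin_of_washboardMin_lt_of_lt_washboardMax (hγ₁ : -1 ≤ γ) (hγ₂ : γ ≤ 1) {l : ℤ}
    {x : ℝ} (h₁ : washboardMin γ l < x) (h₂ : x < washboardMax γ l) : γ < sin x := by
  rw [← sin_sub_int_mul_two_pi x l]
  conv_lhs => rw [← sin_arcsin hγ₁ hγ₂]
  simp only [washboardMax, washboardMin] at h₁ h₂
  exact sin_lt_sin_of_lt_of_lt_pi_sub (neg_pi_div_two_le_arcsin γ)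
    (by linarith) (by linarith)

theorem strictAntiOn_washboardPotential (hγ₁ : -1 ≤ γ) (hγ₂ : γ ≤ 1) (l : ℤ) :
    StrictAntiOn (washboardPotential γ) (Icc (washboardMax γ (l - 1)) (washboardMin γ l)) :=
  strictAntiOn_of_deriv_neg (convex_Icc _ _) (continuous_washboardPotential γ).continuousOn
    fun x hx => by
      rw [interior_Icc] at hx
      rw [(hasDerivAt_washboardPotential γ x).deriv, sub_neg]
      exact sin_lt_of_washboardMax_lt_of_lt_washboardMin hγ₁ hγ₂ hx.1 hx.2

theorem strictMonoOn_washboardPotential (hγ₁ : -1 ≤ γ) (hγ₂ : γ ≤ 1) (l : ℤ) :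
    StrictMonoOn (washboardPotential γ) (Icc (washboardMin γ l) (washboardMax γ l)) :=
  strictMonoOn_of_deriv_pos (convex_Icc _ _) (continuous_washboardPotential γ).continuousOn
    fun x hx => by
      rw [interior_Icc] at hx
      rw [(hasDerivAt_washboardPotential γ x).deriv, sub_pos]
      exact lt_sin_of_washboardMin_lt_of_lt_washboardMax hγ₁ hγ₂ hx.1 hx.2

theorem washboardMin_le_washboardMax (γ : ℝ) (l : ℤ) :
    washboardMin γ l ≤ washboardMax γ l := by
  simp only [washboardMin, washboardMax]
  linarith [arcsin_le_pi_div_two γ]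

theorem washboardPotential_le_max (hγ₁ : -1 ≤ γ) (hγ₂ : γ ≤ 1) {l : ℤ} {y z : ℝ}
    (hy : washboardMax γ (l - 1) ≤ y) (hyz : y ≤ z) (hz : z ≤ washboardMax γ l) :
    washboardPotential γ z ≤
      max (washboardPotential γ y) (washboardPotential γ (washboardMax γ l)) :=
  le_max_of_antitoneOn_of_monotoneOn (strictAntiOn_washboardPotential hγ₁ hγ₂ l).antitoneOn
    (strictMonoOn_washboardPotential hγ₁ hγ₂ l).monotoneOn hy hyz hz le_rfl

theorem washboardPotential_lt_max (hγ₁ : -1 ≤ γ) (hγ₂ : γ ≤ 1) {l : ℤ} {y z : ℝ}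
    (hy : washboardMax γ (l - 1) ≤ y) (hyz : y < z) (hz : z < washboardMax γ l) :
    washboardPotential γ z <
      max (washboardPotential γ y) (washboardPotential γ (washboardMax γ l)) :=
  lt_max_of_strictAntiOn_of_strictMonoOn (strictAntiOn_washboardPotential hγ₁ hγ₂ l)
    (strictMonoOn_washboardPotential hγ₁ hγ₂ l) hy hyz hz le_rfl

theorem lt_washboardMin_of_washboardPotential_lt (hγ₁ : -1 ≤ γ) (hγ₂ : γ ≤ 1) {l : ℤ}
    {x : ℝ} (hx : x ≤ washboardMax γ l)
    (hU : washboardPotential γ (washboardMax γ l) < washboardPotential γ x) :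
    x < washboardMin γ l := by
  by_contra! h
  exact hU.not_ge ((strictMonoOn_washboardPotential hγ₁ hγ₂ l).monotoneOn ⟨h, hx⟩
    ⟨h.trans hx, le_rfl⟩ hx)

end Washboard

structure IsReducedODESolution (μ γ : ℝ) (g : ℝ → ℝ) : Prop where
  contDiff : ContDiff ℝ 2 g
  ode : ∀ ξ, deriv (deriv g) ξ + μ * deriv g ξ + sin (g ξ) - γ = 0

noncomputable def energy (γ : ℝ) (g : ℝ → ℝ) (ξ : ℝ) : ℝ :=
  deriv g ξ ^ 2 / 2 + washboardPotential γ (g ξ)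

theorem energy_of_deriv_eq_zero {γ ξ : ℝ} {g : ℝ → ℝ} (h : deriv g ξ = 0) :
    energy γ g ξ = washboardPotential γ (g ξ) := by
  simp [energy, h]

theorem washboardPotential_lt_energy {γ ξ : ℝ} {g : ℝ → ℝ} (h : deriv g ξ ≠ 0) :
    washboardPotential γ (g ξ) < energy γ g ξ :=
  lt_add_of_pos_left _ (by positivity)

namespace IsReducedODESolution

variable {μ γ : ℝ} {g : ℝ → ℝ}

theorem differentiable (hsol : IsReducedODESolution μ γ g) : Differentiable ℝ g :=
  hsol.contDiff.differentiable (by norm_num)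

theorem continuous (hsol : IsReducedODESolution μ γ g) : Continuous g :=
  hsol.differentiable.continuous

theorem differentiable_deriv (hsol : IsReducedODESolution μ γ g) :
    Differentiable ℝ (deriv g) := by
  simpa using hsol.contDiff.differentiable_iteratedDeriv 1 (by norm_num)

theorem deriv_deriv (hsol : IsReducedODESolution μ γ g) (ξ : ℝ) :
    deriv (deriv g) ξ = γ - sin (g ξ) - μ * deriv g ξ := by
  linarith [hsol.ode ξ]

theorem hasDerivAt_energy (hsol : IsReducedODESolution μ γ g) (ξ : ℝ) :
    HasDerivAt (energy γ g) (-μ * deriv g ξ ^ 2) ξ := by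
  have h := (((hsol.differentiable_deriv ξ).hasDerivAt.pow 2).div_const 2).add
    ((hasDerivAt_washboardPotential γ (g ξ)).comp ξ (hsol.differentiable ξ).hasDerivAt)
  refine h.congr_deriv ?_
  rw [hsol.deriv_deriv]
  ring

theorem antitone_energy (hsol : IsReducedODESolution μ γ g) (hμ : 0 ≤ μ) :
    Antitone (energy γ g) :=
  antitone_of_deriv_nonpos (fun ξ => (hsol.hasDerivAt_energy ξ).differentiableAt) fun ξ => by
    rw [(hsol.hasDerivAt_energy ξ).deriv, neg_mul]
    exact neg_nonpos.mpr (mul_nonneg hμ (sq_nonneg _))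

theorem not_bddAbove_of_washboardPotential_le (hsol : IsReducedODESolution μ γ g) (hμ : 0 ≤ μ)
    {A m : ℝ} (hneg : ∀ x ≤ A, deriv g x < 0)
    (hpot : ∀ x ≤ A, washboardPotential γ (g x) ≤ m) (hm : m < energy γ g A) :
    ¬BddAbove (g '' Iic A) := by
  refine not_bddAbove_image_Iic_of_deriv_le_neg hsol.differentiable
    (sqrt_pos.mpr (by linarith : 0 < 2 * (energy γ g A - m))) fun x hx => ?_
  have hsq : 2 * (energy γ g A - m) ≤ deriv g x ^ 2 := by
    have hex : energy γ g x = deriv g x ^ 2 / 2 + washboardPotential γ (g x) := rfl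
    linarith [hsol.antitone_energy hμ hx, hpot x hx]
  have := sqrt_le_sqrt hsq
  rw [sqrt_sq_eq_abs, abs_of_neg (hneg x hx)] at this
  linarith

theorem not_bddAbove_of_sin_lt (hsol : IsReducedODESolution μ γ g) (hμ : 0 ≤ μ) {A : ℝ}
    (hneg : ∀ x ≤ A, deriv g x < 0) (hsin : ∀ x ≤ A, sin (g x) < γ) :
    ¬BddAbove (g '' Iic A) := by
  have hmono : StrictMonoOn (deriv g) (Iic A) :=
    strictMonoOn_of_deriv_pos (convex_Iic A) hsol.differentiable_deriv.continuous.continuousOn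
      fun x hx => by
        rw [interior_Iic] at hx
        rw [hsol.deriv_deriv]
        linarith [hsin x hx.le, mul_nonpos_of_nonneg_of_nonpos hμ (hneg x hx.le).le]
  exact not_bddAbove_image_Iic_of_deriv_le_neg hsol.differentiable
    (neg_pos.mpr (hneg A le_rfl)) fun x hx => by
      rw [neg_neg]
      exact hmono.monotoneOn hx self_mem_Iic hx

theorem exists_lt_deriv_nonneg (hsol : IsReducedODESolution μ γ g) (hμ : 0 ≤ μ)
    (hγ₁ : -1 ≤ γ) (hγ₂ : γ ≤ 1) {l : ℤ} {ξ₁ : ℝ} (hd : deriv g ξ₁ = 0)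
    (hlow : washboardMax γ (l - 1) < g ξ₁) (hmin : g ξ₁ < washboardMin γ l)
    (hU : washboardPotential γ (washboardMax γ l) < washboardPotential γ (g ξ₁))
    (hno : ∀ x < ξ₁, g x = washboardMax γ l → 0 < deriv g x) :
    ∃ x < ξ₁, 0 ≤ deriv g x := by
  by_contra! hneg
  have hanti : AntitoneOn g (Iic ξ₁) :=
    antitoneOn_of_deriv_nonpos (convex_Iic ξ₁) hsol.continuous.continuousOn
      hsol.differentiable.differentiableOn fun x hx => (hneg x (by rwa [interior_Iic] at hx)).le
  have hmax : ∀ x ≤ ξ₁, g x < washboardMax γ l := fun x hx =>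
    lt_of_forall_ne_of_lt hx hsol.continuous.continuousOn
      (hmin.trans_le (washboardMin_le_washboardMax γ l))
      fun y hy hgy => (hno y hy.2 hgy).not_gt (hneg y hy.2)
  set y := (g ξ₁ + washboardMin γ l) / 2
  have hy₁ : g ξ₁ < y := by simp only [y]; linarith
  have hy₂ : y < washboardMin γ l := by simp only [y]; linarith
  by_cases habove : ∃ ξ₅ < ξ₁, y ≤ g ξ₅
  · obtain ⟨ξ₅, hξ₅, hyξ₅⟩ := habove
    have hmargin : max (washboardPotential γ y) (washboardPotential γ (washboardMax γ l)) <
        energy γ g ξ₅ := calc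
      _ < washboardPotential γ (g ξ₁) :=
        max_lt (strictAntiOn_washboardPotential hγ₁ hγ₂ l ⟨hlow.le, hmin.le⟩
          ⟨(hlow.trans hy₁).le, hy₂.le⟩ hy₁) hU
      _ = energy γ g ξ₁ := (energy_of_deriv_eq_zero hd).symm
      _ ≤ energy γ g ξ₅ := hsol.antitone_energy hμ hξ₅.le
    have hbelow : ∀ x ≤ ξ₅, g x < washboardMax γ l := fun x hx => hmax x (hx.trans hξ₅.le)
    refine hsol.not_bddAbove_of_washboardPotential_le hμ (fun x hx => hneg x (hx.trans_lt hξ₅))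
      (fun x hx => washboardPotential_le_max hγ₁ hγ₂ (hlow.trans hy₁).le
        (hyξ₅.trans (hanti (mem_Iic.2 (hx.trans hξ₅.le)) (mem_Iic.2 hξ₅.le) hx))
        (hbelow x hx).le) hmargin
      ⟨washboardMax γ l, forall_mem_image.2 fun x hx => (hbelow x hx).le⟩
  · simp only [not_exists, not_and, not_le] at habove
    have hbelow : ∀ x ≤ ξ₁ - 1, g x < y := fun x hx => habove x (by linarith)
    refine hsol.not_bddAbove_of_sin_lt hμ (fun x hx => hneg x (by linarith))
      (fun x hx => sin_lt_of_washboardMax_lt_of_lt_washboardMin hγ₁ hγ₂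
        (hlow.trans_le (hanti (mem_Iic.2 (by linarith)) self_mem_Iic (by linarith)))
        ((hbelow x hx).trans hy₂))
      ⟨y, forall_mem_image.2 fun x hx => (hbelow x hx).le⟩

theorem exists_lt_eq_washboardMax_deriv_nonpos (hsol : IsReducedODESolution μ γ g)
    (hμ : 0 ≤ μ) (hγ₁ : -1 ≤ γ) (hγ₂ : γ ≤ 1) {l : ℤ} {ξ₁ : ℝ} (hd : deriv g ξ₁ = 0)
    (hlow : washboardMax γ (l - 1) < g ξ₁) (hhigh : g ξ₁ < washboardMax γ l)
    (hU : washboardPotential γ (washboardMax γ l) < washboardPotential γ (g ξ₁)) :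
    ∃ x < ξ₁, g x = washboardMax γ l ∧ deriv g x ≤ 0 := by
  by_contra! hno
  have hmin := lt_washboardMin_of_washboardPotential_lt hγ₁ hγ₂ hhigh.le hU
  have hforce : 0 < deriv (deriv g) ξ₁ := by
    rw [hsol.deriv_deriv, hd]
    linarith [sin_lt_of_washboardMax_lt_of_lt_washboardMin hγ₁ hγ₂ hlow hmin]
  have hleft : ∀ᶠ x in 𝓝[<] ξ₁, deriv g x < 0 := by
    simpa only [hd] using (hsol.differentiable_deriv ξ₁).hasDerivAt.eventually_nhdsLT_lt hforce
  obtain ⟨x₀, hx₀, hdx₀⟩ := hsol.exists_lt_deriv_nonneg hμ hγ₁ hγ₂ hd hlow hmin hU hno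
  obtain ⟨τ, ⟨-, hτ⟩, hdτ, hnegτ⟩ := exists_zero_forall_neg_Ioo
    hsol.differentiable_deriv.continuous.continuousOn hx₀ hdx₀ hleft
  have hgτ : g ξ₁ < g τ :=
    strictAntiOn_of_deriv_neg (convex_Icc τ ξ₁) hsol.continuous.continuousOn
      (by simpa only [interior_Icc] using hnegτ) (left_mem_Icc.2 hτ.le)
      (right_mem_Icc.2 hτ.le) hτ
  have hτM : g τ < washboardMax γ l :=
    lt_of_forall_ne_of_lt hτ.le hsol.continuous.continuousOn hhigh fun x hx hgx =>
      (hno x hx.2 hgx).not_ge <| hx.1.eq_or_lt.elim (fun h => h ▸ hdτ.le)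
        fun h => (hnegτ x ⟨h, hx.2⟩).le
  have hUτ := washboardPotential_lt_max hγ₁ hγ₂ hlow.le hgτ hτM
  have henergy := hsol.antitone_energy hμ hτ.le
  rw [energy_of_deriv_eq_zero hd, energy_of_deriv_eq_zero hdτ] at henergy
  rw [max_eq_left hU.le] at hUτ
  linarith

end IsReducedODESolution

/-- For a C² solution of the reduced travelling-wave ODE
`g'' + μ g' + sin g - γ = 0` (with `μ ≥ 0`, `0 < γ < 1`): if `g(ξ_k)` is a
local maximum point `π - arcsin γ + 2kπ` of the washboard potential and at
every `ξ ≤ ξ_k` where `g(ξ)` equals some local maximum point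
`π - arcsin γ + 2lπ` one has `g'(ξ) > 0`, then `g'(ξ) > 0` for all
`ξ ≤ ξ_k`. -/
theorem reducedODE_rightward_before_maximum
    (μ γ : ℝ) (hμ : 0 ≤ μ) (hγ0 : 0 < γ) (hγ1 : γ < 1)
    (g : ℝ → ℝ) (hg : ContDiff ℝ 2 g)
    (heq : ∀ ξ : ℝ,
        deriv (deriv g) ξ + μ * deriv g ξ + Real.sin (g ξ) - γ = 0)
    (ξk : ℝ) (k : ℤ) (hval : g ξk = π - Real.arcsin γ + 2 * k * π)
    (hmax : ∀ ξ : ℝ, ξ ≤ ξk →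
        (∃ l : ℤ, g ξ = π - Real.arcsin γ + 2 * l * π) → 0 < deriv g ξ) :
    ∀ ξ : ℝ, ξ ≤ ξk → 0 < deriv g ξ := by
  have hsol : IsReducedODESolution μ γ g := ⟨hg, heq⟩
  have hval : g ξk = washboardMax γ k := hval
  intro ξ₀ hξ₀
  by_contra! hξ₀'
  obtain ⟨ξ₁, hξ₁, hd₁, hpos⟩ :=
    exists_zero_forall_pos_Ioc hsol.differentiable_deriv.continuous.continuousOn hξ₀ hξ₀'
      (hmax ξk le_rfl ⟨k, hval⟩)
  obtain ⟨l, hl₁, hl₂⟩ := exists_washboardMax_sub_one_le_lt γ (g ξ₁)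
  have hlow : washboardMax γ (l - 1) < g ξ₁ :=
    hl₁.lt_of_ne fun h => (hmax ξ₁ hξ₁.2.le ⟨l - 1, h.symm⟩).ne' hd₁
  have hgk : g ξ₁ < g ξk :=
    strictMonoOn_of_deriv_pos (convex_Icc ξ₁ ξk) hsol.continuous.continuousOn
      (fun x hx => hpos x (Ioo_subset_Ioc_self (by rwa [interior_Icc] at hx)))
      (left_mem_Icc.2 hξ₁.2.le) (right_mem_Icc.2 hξ₁.2.le) hξ₁.2
  have hlk : washboardMax γ l ≤ g ξk := by
    have := (washboardMax_strictMono γ).lt_iff_lt.mp (hl₁.trans_lt (hval ▸ hgk))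
    exact hval ▸ (washboardMax_strictMono γ).monotone (by omega)
  obtain ⟨ξ₂, hξ₂, hg₂⟩ :=
    intermediate_value_Ioc hξ₁.2.le hsol.continuous.continuousOn ⟨hl₂, hlk⟩
  have hU : washboardPotential γ (washboardMax γ l) < washboardPotential γ (g ξ₁) := calc
    _ = washboardPotential γ (g ξ₂) := by rw [hg₂]
    _ < energy γ g ξ₂ := washboardPotential_lt_energy (hpos ξ₂ hξ₂).ne'
    _ ≤ energy γ g ξ₁ := hsol.antitone_energy hμ hξ₂.1.le
    _ = _ := energy_of_deriv_eq_zero hd₁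
  obtain ⟨x, hx, hgx, hdx⟩ := hsol.exists_lt_eq_washboardMax_deriv_nonpos hμ (by linarith)
    hγ1.le hd₁ hlow hl₂ hU
  exact (hmax x (hx.le.trans hξ₁.2.le) ⟨l, hgx⟩).not_ge hdx
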